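/- Let p > 0 and q > 0 with p ≠ q, let K = (1/p)·[[p+q, p−q],[p−q, p+q]] with entries k_ij, and set λ₀ = 4·min{2, 2q/p}. Let R₀ > 0 and let v₁, v₂ : ℝ² → ℝ be C² on {|x| > R₀}, with v₁(x) → 0 and v₂(x) → 0 as |x| → ∞, satisfying for all |x| > R₀ and i = 1, 2: Δv_i = 2k_{i1}v₁ + 2k_{i2}v₂ + 2k_{i1}(e^{v₁} − v₁ − 1) + 2k_{i2}(e^{v₂} − v₂ − 1). Then for every ε ∈ (0,1) there exist a constant C_ε > 0 and a radius R ≥ R₀ such that v₁(x)² + v₂(x)² ≤ C_ε·e^{−(1−ε)·√λ₀·|x|} for all |x| ≥ R. -/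

import Mathlib

/-!
Put `u = v₁² + v₂²`. Since `Δ(f²) ≥ 2 f Δf`, the system gives
`Δu ≥ 4 vᵀKv + O(|v|³)`, and `vᵀKv ≥ min(2, 2q/p) |v|²` because `2` and `2q/p` are the
eigenvalues of `K`. As `v → 0` at infinity, `Δu ≥ μ² u` outside a large disk, where
`μ = (1 - ε)√λ₀`. The barrier `φ = C e^{-μ|x|}` has `Δφ = (μ² - μ/|x|) φ ≤ μ² φ`, so at a
positive maximum of `u - φ` we would have `Δ(u - φ) > 0`. Choose `C` with `u ≤ φ` on the
boundary circle; since `u - φ → 0` at infinity, `u - φ` has no positive value outside the disk.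
-/

open Filter

/-- The Laplacian `Δf = ∂₁²f + ∂₂²f` of a function on `ℝ²`, expressed through
iterated directional derivatives along the standard basis. -/
noncomputable def lap (f : EuclideanSpace ℝ (Fin 2) → ℝ) (x : EuclideanSpace ℝ (Fin 2)) : ℝ :=
  ∑ i : Fin 2,
    fderiv ℝ (fun y => fderiv ℝ f y (EuclideanSpace.single i 1)) x (EuclideanSpace.single i 1)

open Topology Real

local notation "ℝ²" => EuclideanSpace ℝ (Fin 2)

section LineRestriction

variable {E : Type*} [NormedAddCommGroup E] [NormedSpace ℝ E] {f : E → ℝ} {x : E}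

theorem ContDiffAt.comp_line {n : WithTop ℕ∞} (hf : ContDiffAt ℝ n f x) (e : E) :
    ContDiffAt ℝ n (fun t : ℝ => f (x + t • e)) 0 := by
  have hf' : ContDiffAt ℝ n f (x + (0 : ℝ) • e) := by simpa using hf
  exact hf'.comp 0 (by fun_prop)

theorem fderiv_fderiv_apply_eq_deriv_deriv_line (hf : ContDiffAt ℝ 2 f x) (e : E) :
    fderiv ℝ (fun y => fderiv ℝ f y e) x e = deriv (deriv fun t : ℝ => f (x + t • e)) 0 := by
  have hline (t : ℝ) : HasDerivAt (fun s : ℝ => x + s • e) e t := by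
    simpa using ((hasDerivAt_id t).smul_const e).const_add x
  have hnear : ∀ᶠ t in 𝓝 (0 : ℝ), ContDiffAt ℝ 2 f (x + t • e) :=
    (hline 0).continuousAt.eventually (by simpa using hf.eventually (by simp))
  have hderiv : (deriv fun t : ℝ => f (x + t • e)) =ᶠ[𝓝 0] fun t => fderiv ℝ f (x + t • e) e := by
    filter_upwards [hnear] with t ht
    exact ((ht.differentiableAt two_ne_zero).hasFDerivAt.comp_hasDerivAt t (hline t)).deriv
  have hfd : HasFDerivAt (fun y => fderiv ℝ f y e) (fderiv ℝ (fun y => fderiv ℝ f y e) x)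
      (x + (0 : ℝ) • e) := by
    simpa using (((hf.fderiv_right (m := 1) le_rfl).differentiableAt one_ne_zero).clm_apply
      (differentiableAt_const e)).hasFDerivAt
  rw [hderiv.deriv_eq]
  exact (hfd.comp_hasDerivAt 0 (hline 0)).deriv.symm

theorem IsLocalMax.comp_line (hmax : IsLocalMax f x) (e : E) :
    IsLocalMax (fun t : ℝ => f (x + t • e)) 0 := by
  have hmax' : IsLocalMax f (x + (0 : ℝ) • e) := by simpa using hmax
  exact hmax'.comp_continuous (g := fun t : ℝ => x + t • e) (by fun_prop)

end LineRestriction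

section SecondDerivative

variable {g h : ℝ → ℝ} {a : ℝ}

theorem IsLocalMax.deriv_deriv_nonpos (hmax : IsLocalMax g a) (hg : ContinuousAt g a) :
    deriv (deriv g) a ≤ 0 := by
  by_contra! hpos
  have hmin : IsLocalMin g a := isLocalMin_of_deriv_deriv_pos hpos hmax.deriv_eq_zero hg
  have hconst : g =ᶠ[𝓝 a] fun _ => g a := by
    filter_upwards [hmin, hmax] with t h₁ h₂ using le_antisymm h₂ h₁
  have hderiv : deriv g =ᶠ[𝓝 a] fun _ => 0 := by simpa using hconst.deriv
  simp [hderiv.deriv_eq] at hpos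

theorem ContDiffAt.hasDerivAt_deriv (hg : ContDiffAt ℝ 2 g a) :
    HasDerivAt (deriv g) (deriv (deriv g) a) a :=
  ((hg.derivWithin (m := 1) (by norm_num)).differentiableAt one_ne_zero).hasDerivAt

theorem deriv_deriv_add (hg : ContDiffAt ℝ 2 g a) (hh : ContDiffAt ℝ 2 h a) :
    deriv (deriv fun t => g t + h t) a = deriv (deriv g) a + deriv (deriv h) a := by
  have hderiv : (deriv fun t => g t + h t) =ᶠ[𝓝 a] fun t => deriv g t + deriv h t := by
    filter_upwards [hg.eventually (by simp), hh.eventually (by simp)] with t hgt hht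
    exact deriv_fun_add (hgt.differentiableAt two_ne_zero) (hht.differentiableAt two_ne_zero)
  rw [hderiv.deriv_eq]
  exact (hg.hasDerivAt_deriv.add hh.hasDerivAt_deriv).deriv

theorem deriv_deriv_sub (hg : ContDiffAt ℝ 2 g a) (hh : ContDiffAt ℝ 2 h a) :
    deriv (deriv fun t => g t - h t) a = deriv (deriv g) a - deriv (deriv h) a := by
  have hderiv : (deriv fun t => g t - h t) =ᶠ[𝓝 a] fun t => deriv g t - deriv h t := by
    filter_upwards [hg.eventually (by simp), hh.eventually (by simp)] with t hgt hht
    exact deriv_fun_sub (hgt.differentiableAt two_ne_zero) (hht.differentiableAt two_ne_zero)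
  rw [hderiv.deriv_eq]
  exact (hg.hasDerivAt_deriv.sub hh.hasDerivAt_deriv).deriv

theorem two_mul_mul_deriv_deriv_le_deriv_deriv_sq (hg : ContDiffAt ℝ 2 g a) :
    2 * g a * deriv (deriv g) a ≤ deriv (deriv fun t => g t ^ 2) a := by
  have hderiv : (deriv fun t => g t ^ 2) =ᶠ[𝓝 a] fun t => 2 * g t * deriv g t := by
    filter_upwards [hg.eventually (by simp)] with t hgt
    simpa using ((hgt.differentiableAt two_ne_zero).hasDerivAt.fun_pow 2).deriv
  have hg' : HasDerivAt g (deriv g a) a := (hg.differentiableAt two_ne_zero).hasDerivAt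
  rw [hderiv.deriv_eq, ((hg'.const_mul 2).fun_mul hg.hasDerivAt_deriv).deriv]
  nlinarith [sq_nonneg (deriv g a)]

end SecondDerivative

theorem deriv_deriv_exp_neg_mul_sqrt {μ s c r : ℝ} (hr : 0 < r) (hrsc : r ^ 2 = s + c ^ 2) :
    deriv (deriv fun t => exp (-μ * √(s + (c + t) ^ 2))) 0
      = (μ ^ 2 * c ^ 2 / r ^ 2 - μ * s / r ^ 3) * exp (-μ * r) := by
  set ρ : ℝ → ℝ := fun t => √(s + (c + t) ^ 2) with hρ_def
  have hρ0 : ρ 0 = r := by simp [hρ_def, ← hrsc, hr.le]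
  have hpos : ∀ᶠ t in 𝓝 (0 : ℝ), 0 < s + (c + t) ^ 2 :=
    (show ContinuousAt (fun t : ℝ => s + (c + t) ^ 2) 0 by fun_prop).eventually
      (lt_mem_nhds (by simpa [← hrsc] using pow_pos hr 2))
  have hρ : ∀ᶠ t in 𝓝 (0 : ℝ), HasDerivAt ρ ((c + t) / ρ t) t := by
    filter_upwards [hpos] with t ht
    have h : HasDerivAt (fun t => √(s + (c + t) ^ 2)) ((c + t) / √(s + (c + t) ^ 2)) t := by
      convert ((((hasDerivAt_id' t).const_add c).fun_pow 2).const_add s).sqrt ht.ne' using 1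
      field_simp
      ring
    exact h
  have hderiv : (deriv fun t => exp (-μ * ρ t)) =ᶠ[𝓝 0]
      fun t => -μ * ((c + t) / ρ t) * exp (-μ * ρ t) := by
    filter_upwards [hρ] with t ht
    rw [((ht.const_mul (-μ)).exp).deriv]
    ring
  have hρ0' : HasDerivAt ρ (c / r) 0 := by simpa [hρ0] using hρ.self_of_nhds
  have hquot : HasDerivAt (fun t => (c + t) / ρ t) ((1 * r - c * (c / r)) / r ^ 2) 0 := by
    simpa [hρ0] using
      ((hasDerivAt_id' (0 : ℝ)).const_add c).fun_div hρ0' (by simpa [hρ0] using hr.ne')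
  rw [hderiv.deriv_eq, (((hquot.const_mul (-μ)).fun_mul (hρ0'.const_mul (-μ)).exp)).deriv, hρ0]
  field_simp
  rw [show s = r ^ 2 - c ^ 2 by linarith]
  ring

theorem Filter.Eventually.exists_forall_norm_ge {E : Type*} [NormedAddCommGroup E] [ProperSpace E]
    {P : E → Prop} (h : ∀ᶠ x in cocompact E, P x) (r : ℝ) : ∃ R > r, ∀ x, R ≤ ‖x‖ → P x := by
  rw [← Metric.cobounded_eq_cocompact, hasBasis_cobounded_norm.eventually_iff] at h
  obtain ⟨R, -, hR⟩ := h
  exact ⟨max R (r + 1), by simp, fun x hx => hR ((le_max_left _ _).trans hx)⟩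

theorem tendsto_mul_exp_neg_mul_norm_cocompact {E : Type*} [NormedAddCommGroup E] [ProperSpace E]
    (C : ℝ) {μ : ℝ} (hμ : 0 < μ) :
    Tendsto (fun y : E => C * exp (-μ * ‖y‖)) (cocompact E) (𝓝 0) := by
  have hexp := tendsto_exp_neg_atTop_nhds_zero.comp
    (tendsto_norm_cocompact_atTop.const_mul_atTop hμ : Tendsto (fun y : E => μ * ‖y‖) _ _)
  simpa [Function.comp_def] using hexp.const_mul C

section Laplacian

variable {f g : ℝ² → ℝ} {x : ℝ²}

theorem lap_eq_sum_deriv_deriv (hf : ContDiffAt ℝ 2 f x) :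
    lap f x = ∑ i, deriv (deriv fun t : ℝ => f (x + t • EuclideanSpace.single i 1)) 0 :=
  Finset.sum_congr rfl fun _ _ => fderiv_fderiv_apply_eq_deriv_deriv_line hf _

theorem lap_nonpos_of_isLocalMax (hf : ContDiffAt ℝ 2 f x) (hmax : IsLocalMax f x) :
    lap f x ≤ 0 := by
  rw [lap_eq_sum_deriv_deriv hf]
  exact Finset.sum_nonpos fun _ _ =>
    (hmax.comp_line _).deriv_deriv_nonpos (hf.comp_line _).continuousAt

theorem lap_add (hf : ContDiffAt ℝ 2 f x) (hg : ContDiffAt ℝ 2 g x) :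
    lap (fun y => f y + g y) x = lap f x + lap g x := by
  rw [lap_eq_sum_deriv_deriv (hf.add hg), lap_eq_sum_deriv_deriv hf, lap_eq_sum_deriv_deriv hg,
    ← Finset.sum_add_distrib]
  exact Finset.sum_congr rfl fun _ _ => deriv_deriv_add (hf.comp_line _) (hg.comp_line _)

theorem lap_sub (hf : ContDiffAt ℝ 2 f x) (hg : ContDiffAt ℝ 2 g x) :
    lap (fun y => f y - g y) x = lap f x - lap g x := by
  rw [lap_eq_sum_deriv_deriv (hf.sub hg), lap_eq_sum_deriv_deriv hf, lap_eq_sum_deriv_deriv hg,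
    ← Finset.sum_sub_distrib]
  exact Finset.sum_congr rfl fun _ _ => deriv_deriv_sub (hf.comp_line _) (hg.comp_line _)

theorem two_mul_mul_lap_le_lap_sq (hf : ContDiffAt ℝ 2 f x) :
    2 * f x * lap f x ≤ lap (fun y => f y ^ 2) x := by
  rw [lap_eq_sum_deriv_deriv hf, lap_eq_sum_deriv_deriv (hf.pow 2), Finset.mul_sum]
  refine Finset.sum_le_sum fun i _ => ?_
  simpa using two_mul_mul_deriv_deriv_le_deriv_deriv_sq (hf.comp_line (EuclideanSpace.single i 1))

theorem norm_add_smul_single (x : ℝ²) (t : ℝ) :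
    ‖x + t • EuclideanSpace.single 0 1‖ = √(x 1 ^ 2 + (x 0 + t) ^ 2) ∧
      ‖x + t • EuclideanSpace.single 1 1‖ = √(x 0 ^ 2 + (x 1 + t) ^ 2) := by
  constructor <;>
  · rw [EuclideanSpace.norm_eq, Fin.sum_univ_two]
    simp [add_comm]

theorem contDiffAt_mul_exp_neg_mul_norm (C μ : ℝ) (hx : x ≠ 0) :
    ContDiffAt ℝ 2 (fun y : ℝ² => C * exp (-μ * ‖y‖)) x :=
  contDiffAt_const.mul (contDiff_exp.contDiffAt.comp x
    (contDiffAt_const.mul (contDiffAt_norm ℝ hx)))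

theorem lap_mul_exp_neg_mul_norm (C μ : ℝ) (hx : x ≠ 0) :
    lap (fun y => C * exp (-μ * ‖y‖)) x = C * (μ ^ 2 - μ / ‖x‖) * exp (-μ * ‖x‖) := by
  have hsmooth := contDiffAt_mul_exp_neg_mul_norm C μ hx
  have hr : 0 < ‖x‖ := norm_pos_iff.2 hx
  have hnorm : ‖x‖ ^ 2 = x 0 ^ 2 + x 1 ^ 2 := by
    rw [EuclideanSpace.norm_eq, Fin.sum_univ_two, sq_sqrt (by positivity)]
    simp
  rw [lap_eq_sum_deriv_deriv hsmooth, Fin.sum_univ_two]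
  simp only [(norm_add_smul_single x _).1, (norm_add_smul_single x _).2, deriv_const_mul_field']
  rw [deriv_deriv_exp_neg_mul_sqrt hr (by rw [hnorm]; ring),
    deriv_deriv_exp_neg_mul_sqrt hr (by rw [hnorm])]
  field_simp
  rw [hnorm]
  ring

end Laplacian

theorem nonpos_of_lap_pos_of_pos {w : ℝ² → ℝ} {R : ℝ} (hcont : ContinuousOn w {x | R ≤ ‖x‖})
    (hsmooth : ∀ x, R < ‖x‖ → ContDiffAt ℝ 2 w x) (hlim : Tendsto w (cocompact ℝ²) (𝓝 0))
    (hbdry : ∀ x, ‖x‖ = R → w x ≤ 0) (hlap : ∀ x, R < ‖x‖ → 0 < w x → 0 < lap w x) :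
    ∀ x, R ≤ ‖x‖ → w x ≤ 0 := by
  intro x₁ hx₁
  by_contra! hpos
  have hclosed : IsClosed {x : ℝ² | R ≤ ‖x‖} := isClosed_le continuous_const continuous_norm
  obtain ⟨x₀, hx₀, hmax⟩ := hcont.exists_isMaxOn' hclosed hx₁
    ((hlim.eventually (ge_mem_nhds hpos)).filter_mono inf_le_left)
  have hx₀pos : 0 < w x₀ := hpos.trans_le (hmax hx₁)
  have hx₀R : R < ‖x₀‖ :=
    (show R ≤ ‖x₀‖ from hx₀).lt_of_ne fun h => by linarith [hbdry x₀ h.symm]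
  have hloc : IsLocalMax w x₀ := hmax.isLocalMax <| mem_of_superset
    ((isOpen_lt continuous_const continuous_norm).mem_nhds hx₀R) fun _ (hy : R < _) => hy.le
  exact (lap_nonpos_of_isLocalMax (hsmooth x₀ hx₀R) hloc).not_gt (hlap x₀ hx₀R hx₀pos)

theorem le_mul_exp_neg_mul_norm_of_sq_mul_le_lap {u : ℝ² → ℝ} {R μ C : ℝ} (hR : 0 ≤ R)
    (hμ : 0 < μ) (hC : 0 ≤ C) (hsmooth : ∀ x, R ≤ ‖x‖ → ContDiffAt ℝ 2 u x)
    (hlim : Tendsto u (cocompact ℝ²) (𝓝 0)) (hsub : ∀ x, R < ‖x‖ → μ ^ 2 * u x ≤ lap u x)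
    (hbdry : ∀ x, ‖x‖ = R → u x ≤ C * exp (-μ * R)) :
    ∀ x, R ≤ ‖x‖ → u x ≤ C * exp (-μ * ‖x‖) := by
  set φ : ℝ² → ℝ := fun y => C * exp (-μ * ‖y‖)
  have hφ : ∀ x, R < ‖x‖ → ContDiffAt ℝ 2 φ x := fun x hx =>
    contDiffAt_mul_exp_neg_mul_norm C μ (norm_pos_iff.1 (hR.trans_lt hx))
  refine fun x hx => sub_nonpos.1 (nonpos_of_lap_pos_of_pos (w := fun y => u y - φ y)
    (fun y hy => ((hsmooth y hy).continuousAt.sub (by fun_prop)).continuousWithinAt)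
    (fun y hy => (hsmooth y hy.le).sub (hφ y hy))
    (by simpa [φ] using hlim.sub (tendsto_mul_exp_neg_mul_norm_cocompact C hμ))
    (fun y hy => sub_nonpos.2 (by simpa [φ, hy] using hbdry y hy)) (fun y hy hw => ?_) x hx)
  have hy₀ : 0 < ‖y‖ := hR.trans_lt hy
  rw [lap_sub (hsmooth y hy.le) (hφ y hy), lap_mul_exp_neg_mul_norm C μ (norm_pos_iff.1 hy₀)]
  have hgap : 0 ≤ C * (μ / ‖y‖) * exp (-μ * ‖y‖) := by positivity
  have hexcess : 0 < μ ^ 2 * (u y - φ y) := mul_pos (pow_pos hμ 2) hw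
  have hφ_expand : C * (μ ^ 2 - μ / ‖y‖) * exp (-μ * ‖y‖)
      = μ ^ 2 * φ y - C * (μ / ‖y‖) * exp (-μ * ‖y‖) := by
    simp only [φ]
    ring
  linarith [hsub y hy]

section Vortex

variable {p q : ℝ}

theorem min_mul_sq_add_sq_le_quadForm (hp : 0 < p) (a b : ℝ) :
    min 2 (2 * q / p) * (a ^ 2 + b ^ 2)
      ≤ (p + q) / p * a ^ 2 + 2 * ((p - q) / p) * (a * b) + (p + q) / p * b ^ 2 := by
  -- diagonalising `K`: eigenvalue `2` along `(1, 1)` and `2q/p` along `(1, -1)`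
  have hdiag : (p + q) / p * a ^ 2 + 2 * ((p - q) / p) * (a * b) + (p + q) / p * b ^ 2
      = (a + b) ^ 2 + q / p * (a - b) ^ 2 := by
    field_simp
    ring
  have h₁ := mul_le_mul_of_nonneg_right (min_le_left 2 (2 * q / p)) (sq_nonneg (a + b))
  have h₂ := mul_le_mul_of_nonneg_right (min_le_right 2 (2 * q / p)) (sq_nonneg (a - b))
  rw [hdiag]
  linear_combination (h₁ + h₂) / 2

noncomputable def vortexRHS (k₁ k₂ a b : ℝ) : ℝ :=
  2 * k₁ * a + 2 * k₂ * b + 2 * k₁ * (exp a - a - 1) + 2 * k₂ * (exp b - b - 1)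

theorem abs_mul_mul_exp_sub_sub_one_le {s t k δ κ : ℝ} (hs : |s| ≤ δ) (hk : |k| ≤ κ)
    (ht : |t| ≤ 1) : |s * (k * (exp t - t - 1))| ≤ δ * κ * t ^ 2 := by
  have hN : |exp t - t - 1| ≤ t ^ 2 := by
    simpa [sub_right_comm] using Real.abs_exp_sub_one_sub_id_le ht
  rw [abs_mul, abs_mul, ← mul_assoc]
  exact mul_le_mul (mul_le_mul hs hk (abs_nonneg k) ((abs_nonneg s).trans hs)) hN
    (abs_nonneg _) (mul_nonneg ((abs_nonneg s).trans hs) ((abs_nonneg k).trans hk))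

theorem mul_sq_add_sq_le_vortexRHS (hp : 0 < p) (hq : 0 < q) {a b δ : ℝ} (ha : |a| ≤ δ)
    (hb : |b| ≤ δ) (hδ : δ ≤ 1) :
    (4 * min 2 (2 * q / p) - 8 * ((p + q) / p) * δ) * (a ^ 2 + b ^ 2)
      ≤ 2 * a * vortexRHS ((p + q) / p) ((p - q) / p) a b
        + 2 * b * vortexRHS ((p - q) / p) ((p + q) / p) a b := by
  set κ := (p + q) / p
  have hκ : |κ| ≤ κ := (abs_of_pos (by positivity)).le
  have hk : |(p - q) / p| ≤ κ := by
    rw [abs_div, abs_of_pos hp]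
    exact div_le_div_of_nonneg_right (abs_le.2 ⟨by linarith, by linarith⟩) hp.le
  have ha1 := ha.trans hδ
  have hb1 := hb.trans hδ
  have e₁ := neg_abs_le (a * (κ * (exp a - a - 1)))
  have e₂ := neg_abs_le (a * ((p - q) / p * (exp b - b - 1)))
  have e₃ := neg_abs_le (b * ((p - q) / p * (exp a - a - 1)))
  have e₄ := neg_abs_le (b * (κ * (exp b - b - 1)))
  have := abs_mul_mul_exp_sub_sub_one_le ha hκ ha1
  have := abs_mul_mul_exp_sub_sub_one_le ha hk hb1
  have := abs_mul_mul_exp_sub_sub_one_le hb hk ha1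
  have := abs_mul_mul_exp_sub_sub_one_le hb hκ hb1
  have := min_mul_sq_add_sq_le_quadForm (q := q) hp a b
  simp only [vortexRHS]
  linarith

theorem eventually_mul_le_vortexRHS (hp : 0 < p) (hq : 0 < q) {ν : ℝ}
    (hν : ν < 4 * min 2 (2 * q / p)) :
    ∀ᶠ v : ℝ × ℝ in 𝓝 0, ν * (v.1 ^ 2 + v.2 ^ 2)
      ≤ 2 * v.1 * vortexRHS ((p + q) / p) ((p - q) / p) v.1 v.2
        + 2 * v.2 * vortexRHS ((p - q) / p) ((p + q) / p) v.1 v.2 := by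
  have hκ : 0 < 8 * ((p + q) / p) := by positivity
  set δ := min 1 ((4 * min 2 (2 * q / p) - ν) / (8 * ((p + q) / p)))
  have hδ : 0 < δ := lt_min one_pos (div_pos (by linarith) hκ)
  have hνδ : ν ≤ 4 * min 2 (2 * q / p) - 8 * ((p + q) / p) * δ := by
    have := (le_div_iff₀' hκ).1 (min_le_right 1 _ : δ ≤ _)
    linarith
  filter_upwards [Metric.closedBall_mem_nhds (0 : ℝ × ℝ) hδ] with v hv
  rw [mem_closedBall_zero_iff] at hv
  have h₁ : |v.1| ≤ δ := (norm_fst_le v).trans hv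
  have h₂ : |v.2| ≤ δ := (norm_snd_le v).trans hv
  exact (mul_le_mul_of_nonneg_right hνδ (by positivity)).trans
    (mul_sq_add_sq_le_vortexRHS hp hq h₁ h₂ (min_le_left _ _))

end Vortex

theorem eventually_mul_le_lap_sq_add_sq {p q ν R₀ : ℝ} (hp : 0 < p) (hq : 0 < q)
    (hν : ν < 4 * min 2 (2 * q / p)) {v₁ v₂ : ℝ² → ℝ}
    (hreg₁ : ContDiffOn ℝ 2 v₁ {x | R₀ < ‖x‖}) (hreg₂ : ContDiffOn ℝ 2 v₂ {x | R₀ < ‖x‖})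
    (hlim₁ : Tendsto v₁ (cocompact ℝ²) (𝓝 0)) (hlim₂ : Tendsto v₂ (cocompact ℝ²) (𝓝 0))
    (hpde : ∀ x, R₀ < ‖x‖ →
      lap v₁ x = vortexRHS ((p + q) / p) ((p - q) / p) (v₁ x) (v₂ x) ∧
      lap v₂ x = vortexRHS ((p - q) / p) ((p + q) / p) (v₁ x) (v₂ x)) :
    ∀ᶠ x in cocompact ℝ², ν * (v₁ x ^ 2 + v₂ x ^ 2) ≤ lap (fun y => v₁ y ^ 2 + v₂ y ^ 2) x := by
  have hopen : IsOpen {x : ℝ² | R₀ < ‖x‖} := isOpen_lt continuous_const continuous_norm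
  filter_upwards [(hlim₁.prodMk_nhds hlim₂).eventually (eventually_mul_le_vortexRHS hp hq hν),
    tendsto_norm_cocompact_atTop.eventually_gt_atTop R₀] with x hv hx
  have h₁ : ContDiffAt ℝ 2 v₁ x := hreg₁.contDiffAt (hopen.mem_nhds hx)
  have h₂ : ContDiffAt ℝ 2 v₂ x := hreg₂.contDiffAt (hopen.mem_nhds hx)
  calc ν * (v₁ x ^ 2 + v₂ x ^ 2) ≤ 2 * v₁ x * lap v₁ x + 2 * v₂ x * lap v₂ x := by
        rw [(hpde x hx).1, (hpde x hx).2]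
        exact hv
    _ ≤ lap (fun y => v₁ y ^ 2) x + lap (fun y => v₂ y ^ 2) x :=
        add_le_add (two_mul_mul_lap_le_lap_sq h₁) (two_mul_mul_lap_le_lap_sq h₂)
    _ = lap (fun y => v₁ y ^ 2 + v₂ y ^ 2) x := (lap_add (h₁.pow 2) (h₂.pow 2)).symm

theorem exponential_decay_of_solutions_general
    (p q : ℝ) (hp : 0 < p) (hq : 0 < q)
    (k11 k12 k21 k22 lam₀ : ℝ)
    (h11 : k11 = (p + q) / p) (h12 : k12 = (p - q) / p)
    (h21 : k21 = (p - q) / p) (h22 : k22 = (p + q) / p)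
    (hlam : lam₀ = 4 * min 2 (2 * q / p))
    (R₀ : ℝ) (hR₀ : 0 < R₀)
    (v₁ v₂ : EuclideanSpace ℝ (Fin 2) → ℝ)
    (hreg1 : ContDiffOn ℝ 2 v₁ {x | R₀ < ‖x‖})
    (hreg2 : ContDiffOn ℝ 2 v₂ {x | R₀ < ‖x‖})
    (hlim1 : Tendsto v₁ (cocompact (EuclideanSpace ℝ (Fin 2))) (nhds 0))
    (hlim2 : Tendsto v₂ (cocompact (EuclideanSpace ℝ (Fin 2))) (nhds 0))
    (hpde : ∀ x, R₀ < ‖x‖ →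
      lap v₁ x = 2 * k11 * v₁ x + 2 * k12 * v₂ x
          + 2 * k11 * (Real.exp (v₁ x) - v₁ x - 1)
          + 2 * k12 * (Real.exp (v₂ x) - v₂ x - 1) ∧
      lap v₂ x = 2 * k21 * v₁ x + 2 * k22 * v₂ x
          + 2 * k21 * (Real.exp (v₁ x) - v₁ x - 1)
          + 2 * k22 * (Real.exp (v₂ x) - v₂ x - 1)) :
    ∀ ε ∈ Set.Ioo (0 : ℝ) 1, ∃ C > (0 : ℝ), ∃ R ≥ R₀, ∀ x, R ≤ ‖x‖ →
      (v₁ x) ^ 2 + (v₂ x) ^ 2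
        ≤ C * Real.exp (-(1 - ε) * Real.sqrt lam₀ * ‖x‖) := by
  subst h11 h12 h21 h22
  rintro ε ⟨hε₀, hε₁⟩
  have hlam₀ : 0 < lam₀ := by rw [hlam]; positivity
  set μ := (1 - ε) * √lam₀
  have hμ : 0 < μ := mul_pos (sub_pos.2 hε₁) (sqrt_pos.2 hlam₀)
  have hμlam : μ ^ 2 < 4 * min 2 (2 * q / p) := by
    rw [mul_pow, sq_sqrt hlam₀.le, ← hlam]
    exact (mul_lt_iff_lt_one_left hlam₀).2 (by nlinarith)
  have hu : ContDiffOn ℝ 2 (fun y => v₁ y ^ 2 + v₂ y ^ 2) {x | R₀ < ‖x‖} :=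
    (hreg1.pow 2).add (hreg2.pow 2)
  obtain ⟨R, hR, hsub⟩ := (eventually_mul_le_lap_sq_add_sq hp hq hμlam hreg1 hreg2 hlim1 hlim2
    hpde).exists_forall_norm_ge R₀
  obtain ⟨M, hM⟩ := (isCompact_sphere (0 : ℝ²) R).bddAbove_image
    (hu.continuousOn.mono fun y hy => by simpa [mem_sphere_zero_iff_norm.1 hy] using hR)
  have hbdry (y : ℝ²) (hy : ‖y‖ = R) :
      v₁ y ^ 2 + v₂ y ^ 2 ≤ max M 1 * exp (μ * R) * exp (-μ * R) := by
    rw [mul_assoc, ← exp_add, neg_mul, add_neg_cancel, exp_zero, mul_one]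
    exact (hM ⟨y, mem_sphere_zero_iff_norm.2 hy, rfl⟩).trans (le_max_left _ _)
  refine ⟨max M 1 * exp (μ * R), by positivity, R, hR.le, fun x hx => ?_⟩
  have hdecay := le_mul_exp_neg_mul_norm_of_sq_mul_le_lap (hR₀.trans hR).le hμ (by positivity)
    (fun y hy => hu.contDiffAt ((isOpen_lt continuous_const continuous_norm).mem_nhds
      (hR.trans_le hy))) (by simpa using (hlim1.pow 2).add (hlim2.pow 2))
    (fun y hy => hsub y hy.le) hbdry x hx
  rwa [show -μ * ‖x‖ = -(1 - ε) * √lam₀ * ‖x‖ by simp only [μ]; ring] at hdecay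

/-- exponential decay estimate (2.46). Let `p, q > 0`, `p ≠ q`, `K`
the coupling matrix, `λ₀ = 4·min{2, 2q/p}`. If `v₁, v₂` are `C²` outside the disk of
radius `R₀`, tend to `0` at infinity, and solve
`Δvᵢ = 2k_{i1}v₁ + 2k_{i2}v₂ + 2k_{i1}(e^{v₁}−v₁−1) + 2k_{i2}(e^{v₂}−v₂−1)` there, then
for every `ε ∈ (0,1)` there are `C_ε > 0` and `R ≥ R₀` with
`v₁² + v₂² ≤ C_ε·e^{−(1−ε)√λ₀|x|}` for `|x| ≥ R`. -/
theorem exponential_decay_of_solutions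
    (p q : ℝ) (hp : 0 < p) (hq : 0 < q) (hpq : p ≠ q)
    (k11 k12 k21 k22 lam₀ : ℝ)
    (h11 : k11 = (p + q) / p) (h12 : k12 = (p - q) / p)
    (h21 : k21 = (p - q) / p) (h22 : k22 = (p + q) / p)
    (hlam : lam₀ = 4 * min 2 (2 * q / p))
    (R₀ : ℝ) (hR₀ : 0 < R₀)
    (v₁ v₂ : EuclideanSpace ℝ (Fin 2) → ℝ)
    (hreg1 : ContDiffOn ℝ 2 v₁ {x | R₀ < ‖x‖})
    (hreg2 : ContDiffOn ℝ 2 v₂ {x | R₀ < ‖x‖})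
    (hlim1 : Tendsto v₁ (cocompact (EuclideanSpace ℝ (Fin 2))) (nhds 0))
    (hlim2 : Tendsto v₂ (cocompact (EuclideanSpace ℝ (Fin 2))) (nhds 0))
    (hpde : ∀ x, R₀ < ‖x‖ →
      lap v₁ x = 2 * k11 * v₁ x + 2 * k12 * v₂ x
          + 2 * k11 * (Real.exp (v₁ x) - v₁ x - 1)
          + 2 * k12 * (Real.exp (v₂ x) - v₂ x - 1) ∧
      lap v₂ x = 2 * k21 * v₁ x + 2 * k22 * v₂ x
          + 2 * k21 * (Real.exp (v₁ x) - v₁ x - 1)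
          + 2 * k22 * (Real.exp (v₂ x) - v₂ x - 1)) :
    ∀ ε ∈ Set.Ioo (0 : ℝ) 1, ∃ C > (0 : ℝ), ∃ R ≥ R₀, ∀ x, R ≤ ‖x‖ →
      (v₁ x) ^ 2 + (v₂ x) ^ 2
        ≤ C * Real.exp (-(1 - ε) * Real.sqrt lam₀ * ‖x‖) :=
  exponential_decay_of_solutions_general p q hp hq k11 k12 k21 k22 lam₀ h11 h12 h21 h22 hlam R₀ hR₀
    v₁ v₂ hreg1 hreg2 hlim1 hlim2 hpde
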